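/- arXiv:2104.08061 — 2 statements merged into one kernel-verified Lean document; each statement's English description precedes it below -/
import Mathlib

section
/- If π_τ = N(m_τ, Σ_τ) satisfies the homotopy equation ∂_τ π_τ = -(Ψ_data - π_τ[Ψ_data]) π_τ with quadratic Ψ_data(θ) = (1/2)(Gθ-t)ᵀΓ⁻¹(Gθ-t), then the mean and covariance satisfy dm_τ/dτ = -Σ_τ Gᵀ Γ⁻¹(G m_τ - t) and dΣ_τ/dτ = -Σ_τ GᵀΓ⁻¹G Σ_τ. -/
open MeasureTheory Matrix

private lemma det_diffAt {D : ℕ} {B : ℝ → Matrix (Fin D) (Fin D) ℝ} {τ : ℝ}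
    (hB : ∀ i j, DifferentiableAt ℝ (fun x => B x i j) τ) :
    DifferentiableAt ℝ (fun x => (B x).det) τ := by
  simp only [Matrix.det_apply']
  exact DifferentiableAt.fun_sum fun σ _ =>
    (DifferentiableAt.fun_finsetProd fun i _ => hB (σ i) i).const_mul _

private lemma inv_entry_diffAt {D : ℕ} {S : ℝ → Matrix (Fin D) (Fin D) ℝ} {τ : ℝ}
    (hdet : (S τ).det ≠ 0)
    (hS : ∀ i j, DifferentiableAt ℝ (fun x => S x i j) τ) (i j : Fin D) :
    DifferentiableAt ℝ (fun x => (S x)⁻¹ i j) τ := by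
  have h : (fun x => (S x)⁻¹ i j)
      = fun x => ((S x).det)⁻¹ * ((S x).updateRow j (Pi.single i 1)).det := by
    funext x
    rw [Matrix.inv_def]
    simp [Matrix.adjugate_apply, Ring.inverse_eq_inv', smul_eq_mul]
  rw [h]
  refine ((det_diffAt hS).inv hdet).mul (det_diffAt fun k l => ?_)
  rcases eq_or_ne k j with rfl | hk
  · simpa [Matrix.updateRow_apply] using differentiableAt_const _
  · simpa [Matrix.updateRow_apply, hk] using hS k l

private lemma symdot {n : ℕ} (M : Matrix (Fin n) (Fin n) ℝ) (hM : Mᵀ = M)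
    (x y : Fin n → ℝ) : x ⬝ᵥ (M *ᵥ y) = y ⬝ᵥ (M *ᵥ x) := by
  rw [Matrix.dotProduct_mulVec, ← Matrix.mulVec_transpose, hM, dotProduct_comm]

private lemma mulVec_dot {n m : ℕ} (G : Matrix (Fin n) (Fin m) ℝ)
    (u : Fin m → ℝ) (w : Fin n → ℝ) : (G *ᵥ u) ⬝ᵥ w = u ⬝ᵥ (Gᵀ *ᵥ w) := by
  rw [dotProduct_comm, Matrix.dotProduct_mulVec, dotProduct_comm,
    Matrix.mulVec_transpose]


/-- if the Gaussian family `π_τ = N(m_τ, Σ_τ)` satisfies the homotopy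
equation `∂_τ π_τ = -(Ψ_data - π_τ[Ψ_data]) π_τ` with quadratic
`Ψ_data(θ) = (1/2)(Gθ - t)ᵀ Γ⁻¹ (Gθ - t)`, then the mean and covariance satisfy
`dm/dτ = -Σ_τ Gᵀ Γ⁻¹ (G m_τ - t)` and `dΣ/dτ = -Σ_τ Gᵀ Γ⁻¹ G Σ_τ`. -/
theorem gaussian_homotopy_moment_equations (D N : ℕ)
    (G : Matrix (Fin N) (Fin D) ℝ) (t : Fin N → ℝ)
    (Γ : Matrix (Fin N) (Fin N) ℝ) (hΓ : Γ.PosDef)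
    (m : ℝ → Fin D → ℝ) (S : ℝ → Matrix (Fin D) (Fin D) ℝ)
    (hSpd : ∀ τ, (S τ).PosDef)
    (hm_smooth : ∀ i, ContDiff ℝ (⊤ : ℕ∞) fun τ => m τ i)
    (hS_smooth : ∀ i j, ContDiff ℝ (⊤ : ℕ∞) fun τ => S τ i j)
    (Ψ : (Fin D → ℝ) → ℝ)
    (hΨ : ∀ θ, Ψ θ = (1 / 2) * ((G *ᵥ θ - t) ⬝ᵥ (Γ⁻¹ *ᵥ (G *ᵥ θ - t))))
    (π : ℝ → (Fin D → ℝ) → ℝ)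
    (hπ : ∀ τ θ, π τ θ =
      Real.exp (-(1 / 2) * ((θ - m τ) ⬝ᵥ ((S τ)⁻¹ *ᵥ (θ - m τ)))) /
        Real.sqrt ((2 * Real.pi) ^ D * (S τ).det))
    (hhom : ∀ τ θ, HasDerivAt (fun τ' => π τ' θ)
      (-(Ψ θ - ∫ θ' : Fin D → ℝ, Ψ θ' * π τ θ') * π τ θ) τ)
    (τ : ℝ) :
    (∀ i, HasDerivAt (fun τ' => m τ' i)
        (-(S τ *ᵥ (Gᵀ *ᵥ (Γ⁻¹ *ᵥ (G *ᵥ m τ - t)))) i) τ) ∧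
    (∀ i j, HasDerivAt (fun τ' => S τ' i j)
        (-(S τ * Gᵀ * Γ⁻¹ * G * S τ) i j) τ) := by
  classical
  -- basic facts
  have hdetpos : ∀ σ, 0 < (S σ).det := fun σ => (hSpd σ).det_pos
  have hdetne : ∀ σ, (S σ).det ≠ 0 := fun σ => (hdetpos σ).ne'
  have hSsym : ∀ σ, (S σ)ᵀ = S σ := fun σ => by
    simpa [Matrix.conjTranspose_eq_transpose_of_trivial] using (hSpd σ).1.eq
  have hΓsym : Γᵀ = Γ := by
    simpa [Matrix.conjTranspose_eq_transpose_of_trivial] using hΓ.1.eq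
  have hΓinvsym : (Γ⁻¹)ᵀ = Γ⁻¹ := by rw [Matrix.transpose_nonsing_inv, hΓsym]
  have hInvsymσ : ∀ σ, ((S σ)⁻¹)ᵀ = (S σ)⁻¹ := fun σ => by
    rw [Matrix.transpose_nonsing_inv, hSsym]
  have hInvsym : ((S τ)⁻¹)ᵀ = (S τ)⁻¹ := hInvsymσ τ
  have hSdiff : ∀ i j, DifferentiableAt ℝ (fun τ' => S τ' i j) τ := fun i j =>
    ((hS_smooth i j).differentiable (by simp)).differentiableAt
  -- derivatives of the mean and covariance entries
  set m' : Fin D → ℝ := fun i => deriv (fun τ' => m τ' i) τ with hm'def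
  have hm' : ∀ i, HasDerivAt (fun τ' => m τ' i) (m' i) τ := fun i =>
    (((hm_smooth i).differentiable (by simp)).differentiableAt).hasDerivAt
  set S' : Matrix (Fin D) (Fin D) ℝ :=
    Matrix.of (fun i j => deriv (fun τ' => S τ' i j) τ) with hS'def
  have hS' : ∀ i j, HasDerivAt (fun τ' => S τ' i j) (S' i j) τ := fun i j =>
    (hSdiff i j).hasDerivAt
  have hS'sym : S'ᵀ = S' := by
    ext i j
    have : (fun τ' => S τ' j i) = fun τ' => S τ' i j := by
      funext σ
      conv_lhs => rw [← hSsym σ]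
      rw [Matrix.transpose_apply]
    simp only [hS'def, Matrix.transpose_apply, Matrix.of_apply, this]
  -- derivative of the inverse covariance entries
  set T : Matrix (Fin D) (Fin D) ℝ :=
    Matrix.of (fun i j => deriv (fun τ' => (S τ')⁻¹ i j) τ) with hTdef
  have hT : ∀ i j, HasDerivAt (fun τ' => (S τ')⁻¹ i j) (T i j) τ := fun i j =>
    (inv_entry_diffAt (hdetne τ) hSdiff i j).hasDerivAt
  have hTsym : Tᵀ = T := by
    ext i j
    have : (fun τ' => (S τ')⁻¹ j i) = fun τ' => (S τ')⁻¹ i j := by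
      funext σ
      conv_lhs => rw [← hInvsymσ σ]
      rw [Matrix.transpose_apply]
    simp only [hTdef, Matrix.transpose_apply, Matrix.of_apply, this]
  -- T * S τ + (S τ)⁻¹ * S' = 0
  have hTS : T * S τ + (S τ)⁻¹ * S' = 0 := by
    ext i j
    have h1 : HasDerivAt (fun τ' => ∑ k, (S τ')⁻¹ i k * S τ' k j)
        (∑ k, (T i k * S τ k j + (S τ)⁻¹ i k * S' k j)) τ :=
      HasDerivAt.fun_sum fun k _ => (hT i k).mul (hS' k j)
    have h2 : (fun τ' => ∑ k, (S τ')⁻¹ i k * S τ' k j)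
        = fun _ => (1 : Matrix (Fin D) (Fin D) ℝ) i j := by
      funext σ
      rw [← Matrix.mul_apply, Matrix.nonsing_inv_mul _ (isUnit_iff_ne_zero.2 (hdetne σ))]
    rw [h2] at h1
    have h3 := h1.unique (hasDerivAt_const τ _)
    simp only [Matrix.add_apply, Matrix.mul_apply, Matrix.zero_apply, ← Finset.sum_add_distrib]
    exact h3
  -- normalization and key identity
  set r : ℝ → ℝ := fun σ => (2 * Real.pi) ^ D * (S σ).det with hrdef
  have hrpos : ∀ σ, 0 < r σ := fun σ =>
    mul_pos (pow_pos (by positivity) D) (hdetpos σ)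
  have hrdiff : DifferentiableAt ℝ r τ := (det_diffAt hSdiff).const_mul _
  set r' : ℝ := deriv r τ with hr'def
  have hr : HasDerivAt r r' τ := hrdiff.hasDerivAt
  have hRpos : 0 < Real.sqrt (r τ) := Real.sqrt_pos.2 (hrpos τ)
  have hR2 : Real.sqrt (r τ) ^ 2 = r τ := Real.sq_sqrt (hrpos τ).le
  -- derivative of the exponent
  have hq : ∀ θ : Fin D → ℝ, HasDerivAt
      (fun τ' => -(1 / 2 : ℝ) * ((θ - m τ') ⬝ᵥ ((S τ')⁻¹ *ᵥ (θ - m τ'))))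
      (-(1 / 2 : ℝ) * (∑ i, ((0 - m' i) * (∑ j, (S τ)⁻¹ i j * (θ j - m τ j))
        + (θ i - m τ i) * (∑ j, (T i j * (θ j - m τ j) + (S τ)⁻¹ i j * (0 - m' j)))))) τ := by
    intro θ
    have h1 : HasDerivAt
        (fun τ' => ∑ i, ((θ i - m τ' i) * (∑ j, (S τ')⁻¹ i j * (θ j - m τ' j))))
        (∑ i, ((0 - m' i) * (∑ j, (S τ)⁻¹ i j * (θ j - m τ j))
          + (θ i - m τ i) * (∑ j, (T i j * (θ j - m τ j) + (S τ)⁻¹ i j * (0 - m' j))))) τ := by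
      refine HasDerivAt.fun_sum fun i _ => ?_
      exact ((hasDerivAt_const τ (θ i)).sub (hm' i)).mul
        (HasDerivAt.fun_sum fun j _ => (hT i j).mul ((hasDerivAt_const τ (θ j)).sub (hm' j)))
    have h2 : (fun τ' => -(1 / 2 : ℝ) * ((θ - m τ') ⬝ᵥ ((S τ')⁻¹ *ᵥ (θ - m τ'))))
        = fun τ' => -(1 / 2 : ℝ) *
            ∑ i, ((θ i - m τ' i) * (∑ j, (S τ')⁻¹ i j * (θ j - m τ' j))) := by
      funext σ
      simp [dotProduct, Matrix.mulVec, Pi.sub_apply]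
    rw [h2]
    exact h1.const_mul _
  -- the key pointwise identity
  have hkey : ∀ θ : Fin D → ℝ,
      -(1 / 2 : ℝ) * (∑ i, ((0 - m' i) * (∑ j, (S τ)⁻¹ i j * (θ j - m τ j))
        + (θ i - m τ i) * (∑ j, (T i j * (θ j - m τ j) + (S τ)⁻¹ i j * (0 - m' j)))))
        + Ψ θ = (∫ θ' : Fin D → ℝ, Ψ θ' * π τ θ') + r' / (2 * r τ) := by
    intro θ
    set Q : ℝ := -(1 / 2 : ℝ) * (∑ i, ((0 - m' i) * (∑ j, (S τ)⁻¹ i j * (θ j - m τ j))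
        + (θ i - m τ i) * (∑ j, (T i j * (θ j - m τ j) + (S τ)⁻¹ i j * (0 - m' j))))) with hQdef
    set Eτ : ℝ := Real.exp (-(1 / 2) * ((θ - m τ) ⬝ᵥ ((S τ)⁻¹ *ᵥ (θ - m τ)))) with hEdef
    have hEpos : 0 < Eτ := Real.exp_pos _
    have hE : HasDerivAt
        (fun τ' => Real.exp (-(1 / 2 : ℝ) * ((θ - m τ') ⬝ᵥ ((S τ')⁻¹ *ᵥ (θ - m τ')))))
        (Eτ * Q) τ := (hq θ).exp
    have hRd : HasDerivAt (fun τ' => Real.sqrt (r τ'))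
        (r' / (2 * Real.sqrt (r τ))) τ := hr.sqrt (hrpos τ).ne'
    have hdiv : HasDerivAt (fun τ' =>
        Real.exp (-(1 / 2 : ℝ) * ((θ - m τ') ⬝ᵥ ((S τ')⁻¹ *ᵥ (θ - m τ')))) / Real.sqrt (r τ'))
        ((Eτ * Q * Real.sqrt (r τ) - Eτ * (r' / (2 * Real.sqrt (r τ)))) / Real.sqrt (r τ) ^ 2)
        τ := hE.div hRd hRpos.ne'
    have hfun : (fun τ' => π τ' θ) = fun τ' =>
        Real.exp (-(1 / 2 : ℝ) * ((θ - m τ') ⬝ᵥ ((S τ')⁻¹ *ᵥ (θ - m τ')))) / Real.sqrt (r τ') :=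
      funext fun σ => hπ σ θ
    have h0 := hhom τ θ
    rw [hfun] at h0
    have heq := h0.unique hdiv
    have hπτ : π τ θ = Eτ / Real.sqrt (r τ) := hπ τ θ
    rw [hπτ] at heq
    have hne : Eτ / Real.sqrt (r τ) ≠ 0 := by positivity
    have h4 : (Eτ * Q * Real.sqrt (r τ) - Eτ * (r' / (2 * Real.sqrt (r τ)))) / Real.sqrt (r τ) ^ 2
        = (Q - r' / (2 * r τ)) * (Eτ / Real.sqrt (r τ)) := by
      rw [← hR2]
      field_simp
      rw [Real.sqrt_sq hRpos.le]
    rw [h4] at heq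
    have h5 : -(Ψ θ - ∫ θ' : Fin D → ℝ, Ψ θ' * π τ θ') = Q - r' / (2 * r τ) :=
      mul_right_cancel₀ hne heq
    linarith [h5]
  -- convert the raw derivative expression to dot-product form
  have hconv : ∀ u : Fin D → ℝ,
      -(1 / 2 : ℝ) * (∑ i, ((0 - m' i) * (∑ j, (S τ)⁻¹ i j * u j)
        + u i * (∑ j, (T i j * u j + (S τ)⁻¹ i j * (0 - m' j)))))
      = (1 / 2 : ℝ) * (m' ⬝ᵥ ((S τ)⁻¹ *ᵥ u)) + (1 / 2) * (u ⬝ᵥ ((S τ)⁻¹ *ᵥ m'))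
        - (1 / 2) * (u ⬝ᵥ (T *ᵥ u)) := by
    intro u
    simp only [dotProduct, Matrix.mulVec, zero_sub, neg_mul, mul_neg,
      Finset.sum_add_distrib, Finset.sum_neg_distrib, mul_add]
    ring
  have hI : ∀ u : Fin D → ℝ,
      (1 / 2 : ℝ) * (m' ⬝ᵥ ((S τ)⁻¹ *ᵥ u)) + (1 / 2) * (u ⬝ᵥ ((S τ)⁻¹ *ᵥ m'))
        - (1 / 2) * (u ⬝ᵥ (T *ᵥ u)) + Ψ (m τ + u)
      = (∫ θ' : Fin D → ℝ, Ψ θ' * π τ θ') + r' / (2 * r τ) := by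
    intro u
    have h := hkey (m τ + u)
    simp only [Pi.add_apply, add_sub_cancel_left] at h
    rw [hconv u] at h
    exact h
  -- expansions of Ψ around the mean
  have ha : ∀ u : Fin D → ℝ, G *ᵥ (m τ + u) - t = (G *ᵥ m τ - t) + G *ᵥ u := fun u => by
    rw [Matrix.mulVec_add]; abel
  have hb : ∀ u : Fin D → ℝ, G *ᵥ (m τ + -u) - t = (G *ᵥ m τ - t) - G *ᵥ u := fun u => by
    rw [Matrix.mulVec_add, Matrix.mulVec_neg]; abel
  have hψ1 : ∀ u : Fin D → ℝ, Ψ (m τ + u)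
      = (1 / 2 : ℝ) * ((G *ᵥ m τ - t) ⬝ᵥ (Γ⁻¹ *ᵥ (G *ᵥ m τ - t)))
        + (G *ᵥ u) ⬝ᵥ (Γ⁻¹ *ᵥ (G *ᵥ m τ - t))
        + (1 / 2) * ((G *ᵥ u) ⬝ᵥ (Γ⁻¹ *ᵥ (G *ᵥ u))) := by
    intro u
    rw [hΨ, ha u]
    simp only [Matrix.mulVec_add, dotProduct_add, add_dotProduct]
    rw [symdot Γ⁻¹ hΓinvsym (G *ᵥ m τ - t) (G *ᵥ u)]
    ring
  have hψ2 : ∀ u : Fin D → ℝ, Ψ (m τ + -u)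
      = (1 / 2 : ℝ) * ((G *ᵥ m τ - t) ⬝ᵥ (Γ⁻¹ *ᵥ (G *ᵥ m τ - t)))
        - (G *ᵥ u) ⬝ᵥ (Γ⁻¹ *ᵥ (G *ᵥ m τ - t))
        + (1 / 2) * ((G *ᵥ u) ⬝ᵥ (Γ⁻¹ *ᵥ (G *ᵥ u))) := by
    intro u
    rw [hΨ, hb u]
    generalize G *ᵥ m τ - t = a
    simp only [Matrix.mulVec_sub, dotProduct_sub, sub_dotProduct]
    rw [symdot Γ⁻¹ hΓinvsym a (G *ᵥ u)]
    ring
  -- linear part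
  have hlin : ∀ u : Fin D → ℝ,
      u ⬝ᵥ ((S τ)⁻¹ *ᵥ m') + (G *ᵥ u) ⬝ᵥ (Γ⁻¹ *ᵥ (G *ᵥ m τ - t)) = 0 := by
    intro u
    have h1 := hI u
    have h2 := hI (-u)
    rw [hψ1 u] at h1
    rw [hψ2 u] at h2
    simp only [Matrix.mulVec_neg, dotProduct_neg, neg_dotProduct, neg_neg,
      mul_neg] at h2
    have hsym1 : m' ⬝ᵥ ((S τ)⁻¹ *ᵥ u) = u ⬝ᵥ ((S τ)⁻¹ *ᵥ m') := symdot _ hInvsym m' u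
    rw [hsym1] at h1 h2
    linarith
  have hveczero : (S τ)⁻¹ *ᵥ m' + Gᵀ *ᵥ (Γ⁻¹ *ᵥ (G *ᵥ m τ - t)) = 0 := by
    funext i
    have h := hlin (Pi.single i 1)
    rw [mulVec_dot G (Pi.single i 1) (Γ⁻¹ *ᵥ (G *ᵥ m τ - t))] at h
    simp only [single_dotProduct, one_mul] at h
    simpa [Pi.add_apply] using h
  have hmveq : m' = -(S τ *ᵥ (Gᵀ *ᵥ (Γ⁻¹ *ᵥ (G *ᵥ m τ - t)))) := by
    have h1 : (S τ)⁻¹ *ᵥ m' = -(Gᵀ *ᵥ (Γ⁻¹ *ᵥ (G *ᵥ m τ - t))) :=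
      eq_neg_of_add_eq_zero_left hveczero
    calc m' = (S τ * (S τ)⁻¹) *ᵥ m' := by
          rw [Matrix.mul_nonsing_inv _ (isUnit_iff_ne_zero.2 (hdetne τ)), Matrix.one_mulVec]
      _ = S τ *ᵥ ((S τ)⁻¹ *ᵥ m') := by rw [← Matrix.mulVec_mulVec]
      _ = -(S τ *ᵥ (Gᵀ *ᵥ (Γ⁻¹ *ᵥ (G *ᵥ m τ - t)))) := by rw [h1, Matrix.mulVec_neg]
  -- quadratic part
  have hquad : ∀ u : Fin D → ℝ, u ⬝ᵥ (T *ᵥ u) = u ⬝ᵥ ((Gᵀ * Γ⁻¹ * G) *ᵥ u) := by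
    intro u
    have h1 := hI u
    have h2 := hI (-u)
    have h0 := hI 0
    rw [hψ1 u] at h1
    rw [hψ2 u] at h2
    rw [hψ1 0] at h0
    simp only [Matrix.mulVec_zero, dotProduct_zero, zero_dotProduct, add_zero,
      mul_zero, sub_zero, zero_add] at h0
    simp only [Matrix.mulVec_neg, dotProduct_neg, neg_dotProduct, neg_neg,
      mul_neg] at h2
    have hGu : (G *ᵥ u) ⬝ᵥ (Γ⁻¹ *ᵥ (G *ᵥ u)) = u ⬝ᵥ ((Gᵀ * Γ⁻¹ * G) *ᵥ u) := by
      rw [mulVec_dot]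
      simp only [Matrix.mulVec_mulVec, Matrix.mul_assoc]
    linarith
  have hd : ∀ (M : Matrix (Fin D) (Fin D) ℝ) (k l : Fin D),
      Pi.single k (1 : ℝ) ⬝ᵥ (M *ᵥ Pi.single l 1) = M k l := by
    intro M k l
    rw [Matrix.mulVec_single, single_dotProduct]
    simp
  have hPsym : (Gᵀ * Γ⁻¹ * G)ᵀ = Gᵀ * Γ⁻¹ * G := by
    simp [Matrix.transpose_mul, hΓinvsym, Matrix.mul_assoc]
  have hTeq : T = Gᵀ * Γ⁻¹ * G := by
    ext i j
    have e1 := hquad (Pi.single i 1 + Pi.single j 1)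
    have e2 := hquad (Pi.single i 1)
    have e3 := hquad (Pi.single j 1)
    simp only [Matrix.mulVec_add, dotProduct_add, add_dotProduct] at e1
    simp only [hd] at e1 e2 e3
    have hTij : T j i = T i j := by
      have h := congrFun (congrFun hTsym i) j
      rwa [Matrix.transpose_apply] at h
    have hPij : (Gᵀ * Γ⁻¹ * G) j i = (Gᵀ * Γ⁻¹ * G) i j := by
      have h := congrFun (congrFun hPsym i) j
      rwa [Matrix.transpose_apply] at h
    linarith
  have hS'eq : S' = -(S τ * Gᵀ * Γ⁻¹ * G * S τ) := by
    have h1 : (S τ)⁻¹ * S' = -(T * S τ) := eq_neg_of_add_eq_zero_right hTS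
    calc S' = (S τ * (S τ)⁻¹) * S' := by
          rw [Matrix.mul_nonsing_inv _ (isUnit_iff_ne_zero.2 (hdetne τ)), Matrix.one_mul]
      _ = S τ * ((S τ)⁻¹ * S') := by rw [Matrix.mul_assoc]
      _ = S τ * -(T * S τ) := by rw [h1]
      _ = -(S τ * Gᵀ * Γ⁻¹ * G * S τ) := by
          rw [hTeq, Matrix.mul_neg]
          congr 1
          simp only [Matrix.mul_assoc]
  constructor
  · intro i
    have h := hm' i
    rw [hmveq] at h
    exact h
  · intro i j
    have h := hS' i j
    rw [hS'eq] at h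
    exact h
end

section
/- For the linear-Gaussian homotopy ODEs dm_τ/dτ = -Σ_τ Gᵀ Γ⁻¹(G m_τ - t), dΣ_τ/dτ = -Σ_τ GᵀΓ⁻¹G Σ_τ with initial data m_0, Σ_0 (Σ_0 positive definite), the solutions are m_τ = m_0 - K_τ(G m_0 - t) and Σ_τ = Σ_0 - K_τ G Σ_0, where K_τ = τ Σ_0 Gᵀ (Γ + τ G Σ_0 Gᵀ)⁻¹ is the Kalman gain. -/
/-!
In information form the Riccati equation `Σ' = -Σ B Σ`, `B = Gᵀ Γ⁻¹ G`, becomes linear: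
`E = Σ_τ (Σ₀⁻¹ + τ B) - 1` solves the linear equation `E' = -Σ_τ B E` with `E 0 = 0`, so Grönwall
gives `Σ_τ = (Σ₀⁻¹ + τ B)⁻¹`. Likewise the information vector `(Σ₀⁻¹ + τ B) m_τ` has constant
derivative `Gᵀ Γ⁻¹ t`. The Woodbury-type identities `(Σ₀ - K_τ G Σ₀)(Σ₀⁻¹ + τ B) = 1` and
`τ (Σ₀ - K_τ G Σ₀) Gᵀ Γ⁻¹ = K_τ` turn both information-form solutions into the Kalman-gain form.
-/

open Matrix Set

-- Any norm would do; the ℓ∞ operator norm makes square matrices a normed `ℝ`-algebra.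
attribute [local instance] Matrix.linftyOpNormedAddCommGroup Matrix.linftyOpNormedSpace
  Matrix.linftyOpNormedRing Matrix.linftyOpNormedAlgebra

section KalmanGain

variable {m n R : Type*} [Fintype m] [Fintype n] [DecidableEq m] [CommRing R]

noncomputable def kalmanGain (S₀ : Matrix n n R) (G : Matrix m n R) (Γ : Matrix m m R) (τ : R) :
    Matrix n m R :=
  τ • (S₀ * Gᵀ * (Γ + τ • (G * S₀ * Gᵀ))⁻¹)

theorem smul_sub_kalmanGain_mul_transpose_mul_inv {S₀ : Matrix n n R} {G : Matrix m n R}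
    {Γ : Matrix m m R} {τ : R} (hΓ : IsUnit Γ) (hA : IsUnit (Γ + τ • (G * S₀ * Gᵀ))) :
    τ • ((S₀ - kalmanGain S₀ G Γ τ * G * S₀) * Gᵀ * Γ⁻¹) = kalmanGain S₀ G Γ τ := by
  set A := Γ + τ • (G * S₀ * Gᵀ)
  have hA_inv : A⁻¹ + τ • (A⁻¹ * (G * S₀ * Gᵀ) * Γ⁻¹) = Γ⁻¹ :=
    calc A⁻¹ + τ • (A⁻¹ * (G * S₀ * Gᵀ) * Γ⁻¹) = A⁻¹ * A * Γ⁻¹ := by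
          simp only [A, Matrix.mul_add, Matrix.add_mul, Matrix.mul_smul, Matrix.smul_mul,
            mul_nonsing_inv_cancel_right _ _ ((isUnit_iff_isUnit_det Γ).1 hΓ)]
      _ = Γ⁻¹ := by rw [nonsing_inv_mul _ ((isUnit_iff_isUnit_det A).1 hA), Matrix.one_mul]
  calc τ • ((S₀ - kalmanGain S₀ G Γ τ * G * S₀) * Gᵀ * Γ⁻¹)
      = τ • (S₀ * Gᵀ * (Γ⁻¹ - τ • (A⁻¹ * (G * S₀ * Gᵀ) * Γ⁻¹))) := by
        simp only [kalmanGain, Matrix.sub_mul, Matrix.mul_sub, Matrix.smul_mul, Matrix.mul_smul,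
          Matrix.mul_assoc, A]
    _ = kalmanGain S₀ G Γ τ := by rw [sub_eq_of_eq_add hA_inv.symm]; rfl

theorem sub_kalmanGain_mul_inv_add_smul_eq_one [DecidableEq n] {S₀ : Matrix n n R}
    {G : Matrix m n R} {Γ : Matrix m m R} {τ : R} (hS₀ : IsUnit S₀) (hΓ : IsUnit Γ)
    (hA : IsUnit (Γ + τ • (G * S₀ * Gᵀ))) :
    (S₀ - kalmanGain S₀ G Γ τ * G * S₀) * (S₀⁻¹ + τ • (Gᵀ * Γ⁻¹ * G)) = 1 := by
  calc (S₀ - kalmanGain S₀ G Γ τ * G * S₀) * (S₀⁻¹ + τ • (Gᵀ * Γ⁻¹ * G))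
      = 1 - kalmanGain S₀ G Γ τ * G
        + τ • ((S₀ - kalmanGain S₀ G Γ τ * G * S₀) * Gᵀ * Γ⁻¹) * G := by
        simp only [Matrix.mul_add, Matrix.sub_mul, Matrix.mul_smul, Matrix.smul_mul,
          Matrix.mul_assoc, mul_nonsing_inv _ ((isUnit_iff_isUnit_det S₀).1 hS₀), Matrix.mul_one]
    _ = 1 := by rw [smul_sub_kalmanGain_mul_transpose_mul_inv hΓ hA]; abel

theorem sub_kalmanGain_mulVec_inv_mulVec_add_smul [DecidableEq n] {S₀ : Matrix n n R}
    {G : Matrix m n R} {Γ : Matrix m m R} {τ : R} (hS₀ : IsUnit S₀) (hΓ : IsUnit Γ)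
    (hA : IsUnit (Γ + τ • (G * S₀ * Gᵀ))) (m₀ : n → R) (t : m → R) :
    (S₀ - kalmanGain S₀ G Γ τ * G * S₀) *ᵥ (S₀⁻¹ *ᵥ m₀ + τ • ((Gᵀ * Γ⁻¹) *ᵥ t)) =
      m₀ - kalmanGain S₀ G Γ τ *ᵥ (G *ᵥ m₀ - t) := by
  calc (S₀ - kalmanGain S₀ G Γ τ * G * S₀) *ᵥ (S₀⁻¹ *ᵥ m₀ + τ • ((Gᵀ * Γ⁻¹) *ᵥ t))
      = m₀ - kalmanGain S₀ G Γ τ *ᵥ (G *ᵥ m₀)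
        + (τ • ((S₀ - kalmanGain S₀ G Γ τ * G * S₀) * Gᵀ * Γ⁻¹)) *ᵥ t := by
        simp only [mulVec_add, mulVec_smul, mulVec_mulVec, Matrix.sub_mul, sub_mulVec,
          Matrix.mul_assoc, mul_nonsing_inv _ ((isUnit_iff_isUnit_det S₀).1 hS₀), Matrix.mul_one,
          one_mulVec, smul_mulVec]
    _ = m₀ - kalmanGain S₀ G Γ τ *ᵥ (G *ᵥ m₀ - t) := by
        rw [smul_sub_kalmanGain_mul_transpose_mul_inv hΓ hA, mulVec_sub]; abel

end KalmanGain

theorem Matrix.hasDerivAt_of_entries {m n : Type*} [Fintype m] [Fintype n]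
    {f : ℝ → Matrix m n ℝ} {f' : Matrix m n ℝ} {x : ℝ}
    (h : ∀ i j, HasDerivAt (fun y => f y i j) (f' i j) x) : HasDerivAt f f' x := by
  have hpi : HasDerivAt (fun y => of.symm (f y)) (of.symm f') x :=
    hasDerivAt_pi.2 fun i => hasDerivAt_pi.2 (h i)
  exact ((ofLinearEquiv ℝ).toContinuousLinearEquiv : (m → n → ℝ) ≃L[ℝ] Matrix m n ℝ)
    |>.hasFDerivAt.comp_hasDerivAt x hpi

theorem HasDerivAt.const_mulVec {m n : Type*} [Fintype m] [Fintype n] (M : Matrix m n ℝ)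
    {v : ℝ → n → ℝ} {v' : n → ℝ} {x : ℝ} (h : HasDerivAt v v' x) :
    HasDerivAt (fun y => M *ᵥ v y) (M *ᵥ v') x :=
  (mulVecLin M).toContinuousLinearMap.hasFDerivAt.comp_hasDerivAt x h

theorem eqOn_zero_of_hasDerivAt_eq_mul_self {R : Type*} [NormedRing R] [NormedSpace ℝ R]
    {f c : ℝ → R} {a b : ℝ} (hc : ContinuousOn c (Icc a b))
    (hf : ∀ x ∈ Icc a b, HasDerivAt f (c x * f x) x) (ha : f a = 0) :
    EqOn f 0 (Icc a b) := by
  obtain ⟨C, hC⟩ := isCompact_Icc.exists_bound_of_continuousOn hc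
  refine eq_zero_of_abs_deriv_le_mul_abs_self_of_eq_zero_right (K := C)
    (fun x hx => (hf x hx).continuousAt.continuousWithinAt)
    (fun x hx => (hf x (Ico_subset_Icc_self hx)).hasDerivWithinAt) ha fun x hx => ?_
  exact (norm_mul_le _ _).trans
    (mul_le_mul_of_nonneg_right (hC x (Ico_subset_Icc_self hx)) (norm_nonneg _))

theorem mul_add_smul_eq_one_of_hasDerivAt_riccati {R : Type*} [NormedRing R] [NormedAlgebra ℝ R]
    {S : ℝ → R} {B P₀ : R} (hS : ∀ τ, 0 ≤ τ → HasDerivAt S (-(S τ * B * S τ)) τ)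
    (h0 : S 0 * P₀ = 1) (τ : ℝ) (hτ : 0 ≤ τ) : S τ * (P₀ + τ • B) = 1 := by
  have hE : ∀ x ∈ Icc 0 τ, HasDerivAt (fun y => S y * (P₀ + y • B) - 1)
      (-(S x * B) * (S x * (P₀ + x • B) - 1)) x := by
    intro x hx
    have hP : HasDerivAt (fun y : ℝ => P₀ + y • B) B x := by
      simpa using ((hasDerivAt_id x).smul_const B).const_add P₀
    refine (((hS x hx.1).mul hP).sub_const 1).congr_deriv ?_
    noncomm_ring
  have hc : ContinuousOn (fun x => -(S x * B)) (Icc 0 τ) := fun x hx =>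
    ((hS x hx.1).continuousAt.mul continuousAt_const).neg.continuousWithinAt
  exact sub_eq_zero.1 (eqOn_zero_of_hasDerivAt_eq_mul_self hc hE (by simp [h0]) ⟨hτ, le_rfl⟩)

theorem add_smul_mulVec_eq_of_hasDerivAt {n : Type*} [Fintype n] [DecidableEq n]
    {S : ℝ → Matrix n n ℝ} {B P₀ : Matrix n n ℝ} {m : ℝ → n → ℝ} {c : n → ℝ}
    (hPS : ∀ τ, 0 ≤ τ → (P₀ + τ • B) * S τ = 1)
    (hm : ∀ τ, 0 ≤ τ → HasDerivAt m (-(S τ *ᵥ (B *ᵥ m τ - c))) τ) (τ : ℝ) (hτ : 0 ≤ τ) :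
    (P₀ + τ • B) *ᵥ m τ = P₀ *ᵥ m 0 + τ • c := by
  have hu : ∀ x ∈ Icc 0 τ, HasDerivAt (fun y => P₀ *ᵥ m y + y • (B *ᵥ m y) - y • c) 0 x := by
    intro x hx
    have h := (((hm x hx.1).const_mulVec P₀).add
      ((hasDerivAt_id x).smul ((hm x hx.1).const_mulVec B))).sub ((hasDerivAt_id x).smul_const c)
    refine h.congr_deriv ?_
    have hPSw : (P₀ + x • B) *ᵥ (S x *ᵥ (B *ᵥ m x - c)) = B *ᵥ m x - c := by
      rw [mulVec_mulVec, hPS x hx.1, one_mulVec]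
    simp only [id, one_smul, mulVec_neg, smul_neg, add_mulVec, smul_mulVec] at hPSw ⊢
    linear_combination (norm := module) -hPSw
  have hconst := constant_of_has_deriv_right_zero
    (fun x hx => (hu x hx).continuousAt.continuousWithinAt)
    (fun x hx => (hu x (Ico_subset_Icc_self hx)).hasDerivWithinAt) τ ⟨hτ, le_rfl⟩
  simp only [zero_smul, add_zero, sub_zero] at hconst
  rw [add_mulVec, smul_mulVec, ← hconst]
  abel

/-- the linear-Gaussian homotopy ODEs
`dm/dτ = -Σ_τ Gᵀ Γ⁻¹ (G m_τ - t)` and `dΣ/dτ = -Σ_τ Gᵀ Γ⁻¹ G Σ_τ` with initial data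
`m_0, Σ_0` have solutions `m_τ = m_0 - K_τ (G m_0 - t)` and `Σ_τ = Σ_0 - K_τ G Σ_0`,
where `K_τ = τ Σ_0 Gᵀ (Γ + τ G Σ_0 Gᵀ)⁻¹` is the Kalman gain. -/
theorem linear_gaussian_homotopy_solution (D N : ℕ)
    (G : Matrix (Fin N) (Fin D) ℝ) (t : Fin N → ℝ)
    (Γ : Matrix (Fin N) (Fin N) ℝ) (hΓ : Γ.PosDef)
    (m0 : Fin D → ℝ) (S0 : Matrix (Fin D) (Fin D) ℝ) (hS0 : S0.PosDef)
    (hinv : ∀ τ : ℝ, 0 ≤ τ → IsUnit (Γ + τ • (G * S0 * Gᵀ)))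
    (m : ℝ → Fin D → ℝ) (S : ℝ → Matrix (Fin D) (Fin D) ℝ)
    (hm0 : m 0 = m0) (hS0' : S 0 = S0)
    (hmode : ∀ τ, 0 ≤ τ → ∀ i, HasDerivAt (fun τ' => m τ' i)
      (-(S τ *ᵥ (Gᵀ *ᵥ (Γ⁻¹ *ᵥ (G *ᵥ m τ - t)))) i) τ)
    (hSode : ∀ τ, 0 ≤ τ → ∀ i j, HasDerivAt (fun τ' => S τ' i j)
      (-(S τ * Gᵀ * Γ⁻¹ * G * S τ) i j) τ)
    (K : ℝ → Matrix (Fin D) (Fin N) ℝ)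
    (hK : ∀ τ, K τ = τ • (S0 * Gᵀ * (Γ + τ • (G * S0 * Gᵀ))⁻¹)) :
    ∀ τ, 0 ≤ τ →
      m τ = m0 - K τ *ᵥ (G *ᵥ m0 - t) ∧ S τ = S0 - K τ * G * S0 := by
  set B := Gᵀ * Γ⁻¹ * G
  have hSd : ∀ τ, 0 ≤ τ → HasDerivAt S (-(S τ * B * S τ)) τ := fun τ hτ =>
    Matrix.hasDerivAt_of_entries fun i j =>
      (hSode τ hτ i j).congr_deriv (by simp only [B, Matrix.mul_assoc]; rfl)
  have hmd : ∀ τ, 0 ≤ τ → HasDerivAt m (-(S τ *ᵥ (B *ᵥ m τ - (Gᵀ * Γ⁻¹) *ᵥ t))) τ :=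
    fun τ hτ => (hasDerivAt_pi.2 (hmode τ hτ)).congr_deriv
      (by simp only [B, mulVec_sub, mulVec_mulVec, Matrix.mul_assoc]; rfl)
  have hSP : ∀ τ, 0 ≤ τ → S τ * (S0⁻¹ + τ • B) = 1 :=
    mul_add_smul_eq_one_of_hasDerivAt_riccati hSd
      (by rw [hS0', mul_nonsing_inv _ ((isUnit_iff_isUnit_det S0).1 hS0.isUnit)])
  intro τ hτ
  have hS : S τ = S0 - K τ * G * S0 := by
    rw [hK τ]
    exact left_inv_eq_right_inv (hSP τ hτ)
      (mul_eq_one_comm.1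
        (sub_kalmanGain_mul_inv_add_smul_eq_one hS0.isUnit hΓ.isUnit (hinv τ hτ)))
  have hinfo := add_smul_mulVec_eq_of_hasDerivAt (fun τ hτ => mul_eq_one_comm.1 (hSP τ hτ))
    hmd τ hτ
  refine ⟨?_, hS⟩
  rw [← one_mulVec (m τ), ← hSP τ hτ, ← mulVec_mulVec, hinfo, hm0, hS, hK τ]
  exact sub_kalmanGain_mulVec_inv_mulVec_add_smul hS0.isUnit hΓ.isUnit (hinv τ hτ) m0 t
end
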